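/- Let s, t ≥ 4 both be even. Let x = (i, j) and y = (i', j) be vertices of C_s □ C_t lying in the same copy of C_s whose first coordinates are at distance s/2 in C_s (i.e., x and y are diametral in that copy of C_s), let z = (i'', j) where i'' is adjacent to i in C_s, and let w = (i, j') where j' is adjacent to j in C_t. Then {x, y, z, w} is a resolving set of C_s □ C_t. -/

import Mathlib

/-!
Distances in `C_s □ C_t` add coordinatewise. Since `i` and `i'` are antipodal in `C_s`,
`d(v, i) + d(v, i') = s / 2` for every `v`, so the distances to `x` and `y` recover `d(a, i)` and
`d(b, j)` separately for a vertex `(a, b)`. In a cycle, two vertices at the same distance from `u`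
are equal or mirror images about `u` (`a + c = 2u`), and for `n ≥ 3` they cannot be mirror images
about both ends of an edge. So `z` forces equal first coordinates, and then `w` forces equal second
coordinates.
-/

open SimpleGraph

def IsResolving {V : Type*} (G : SimpleGraph V) (W : Set V) : Prop :=
  ∀ x y : V, x ≠ y → ∃ z ∈ W, G.dist x z ≠ G.dist y z

namespace SimpleGraph

variable {α β : Type*} {G : SimpleGraph α} {H : SimpleGraph β}

lemma Connected.dist_boxProd (hG : G.Connected) (hH : H.Connected) (x y : α × β) :
    (G □ H).dist x y = G.dist x.1 y.1 + H.dist x.2 y.2 := by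
  apply Nat.cast_injective (R := ℕ∞)
  rw [Nat.cast_add, ((hG.boxProd hH).preconnected x y).coe_dist_eq_edist,
    (hG.preconnected _ _).coe_dist_eq_edist, (hH.preconnected _ _).coe_dist_eq_edist,
    edist_boxProd]

variable {n : ℕ}

lemma cycleGraph_connected_of_neZero [NeZero n] : (cycleGraph n).Connected := by
  obtain ⟨k, rfl⟩ := Nat.exists_eq_succ_of_ne_zero (NeZero.ne n)
  exact cycleGraph_connected

lemma val_cases_of_cycleGraph_adj {u v : Fin n} (h : (cycleGraph n).Adj u v) :
    u.val + 1 = v.val ∨ v.val + 1 = u.val ∨ (u.val + 1 = n ∧ v.val = 0) ∨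
      (v.val + 1 = n ∧ u.val = 0) := by
  rw [cycleGraph_adj'] at h
  rcases lt_trichotomy u v with huv | rfl | hvu
  · rw [Fin.sub_val_of_le huv.le, Fin.coe_sub_iff_lt.2 huv] at h
    omega
  · simp [Fin.sub_val_of_le] at h
  · rw [Fin.sub_val_of_le hvu.le, Fin.coe_sub_iff_lt.2 hvu] at h
    omega

lemma cycleGraph_adj_wraparound {u v : Fin n} (hn : 2 ≤ n) (hu : u.val + 1 = n)
    (hv : v.val = 0) : (cycleGraph n).Adj u v := by
  have hvu : v < u := by rw [Fin.lt_def]; omega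
  rw [cycleGraph_adj']
  right
  rw [Fin.coe_sub_iff_lt.2 hvu]
  omega

lemma cycleGraph_dist_le_of_val_eq_add {u v : Fin n} {k : ℕ} (h : v.val = u.val + k) :
    (cycleGraph n).dist u v ≤ k := by
  have : NeZero n := ⟨by omega⟩
  induction k generalizing v with
  | zero => simp [Fin.ext (h.trans (add_zero _))]
  | succ k ih =>
    let w : Fin n := ⟨u.val + k, by omega⟩
    have hwv : (cycleGraph n).Adj w v :=
      pathGraph_le_cycleGraph (pathGraph_adj.2 (by simp only [w]; omega))
    calc (cycleGraph n).dist u v ≤ (cycleGraph n).dist u w + (cycleGraph n).dist w v :=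
          cycleGraph_connected_of_neZero.dist_triangle
      _ ≤ k + 1 := by rw [dist_eq_one_iff_adj.2 hwv]; exact Nat.add_le_add_right (ih rfl) 1

lemma le_length_of_cycleGraph_walk {u v : Fin n} (w : (cycleGraph n).Walk u v) :
    min (Nat.dist u v) (n - Nat.dist u v) ≤ w.length := by
  induction w with
  | nil => simp
  | cons h w ih =>
    have := val_cases_of_cycleGraph_adj h
    rw [Walk.length_cons]
    unfold Nat.dist at *
    omega

theorem cycleGraph_dist_eq (u v : Fin n) :
    (cycleGraph n).dist u v = min (Nat.dist u v) (n - Nat.dist u v) := by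
  wlog huv : u ≤ v generalizing u v
  · rw [dist_comm, this v u (le_of_not_ge huv), Nat.dist_comm]
  have : NeZero n := ⟨by omega⟩
  obtain ⟨w, hw⟩ := cycleGraph_connected_of_neZero.exists_walk_length_eq_dist u v
  refine le_antisymm ?_ (hw ▸ le_length_of_cycleGraph_walk w)
  rw [Fin.le_def] at huv
  rw [Nat.dist_eq_sub_of_le huv]
  rcases le_total (v - u : ℕ) (n - (v - u)) with h | h
  · rw [min_eq_left h]
    exact cycleGraph_dist_le_of_val_eq_add (by omega)
  · rw [min_eq_right h]
    let first : Fin n := ⟨0, by omega⟩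
    let last : Fin n := ⟨n - 1, by omega⟩
    have hadj : (cycleGraph n).Adj first last :=
      (cycleGraph_adj_wraparound (by omega) (by simp only [last]; omega) rfl).symm
    calc (cycleGraph n).dist u v
        ≤ (cycleGraph n).dist first u + (cycleGraph n).dist first last +
            (cycleGraph n).dist last v := by
          rw [dist_comm (u := first)]
          exact cycleGraph_connected_of_neZero.dist_triangle.trans
            (Nat.add_le_add_right cycleGraph_connected_of_neZero.dist_triangle _)
      _ ≤ u + 1 + (n - 1 - v) := by
          rw [dist_eq_one_iff_adj.2 hadj]
          gcongr
          · exact cycleGraph_dist_le_of_val_eq_add (by simp [first])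
          · rw [dist_comm]
            exact cycleGraph_dist_le_of_val_eq_add (by simp only [last]; omega)
      _ = n - (v - u) := by have := v.isLt; omega

lemma cycleGraph_dist_add_dist_of_dist_eq_half (hn : Even n) {u u' : Fin n}
    (h : (cycleGraph n).dist u u' = n / 2) (a : Fin n) :
    (cycleGraph n).dist a u + (cycleGraph n).dist a u' = n / 2 := by
  obtain ⟨m, rfl⟩ := hn
  simp only [cycleGraph_dist_eq, Nat.dist] at h ⊢
  omega

theorem cycleGraph_dist_eq_dist_iff {u a c : Fin n} :
    (cycleGraph n).dist a u = (cycleGraph n).dist c u ↔ a = c ∨ a + c = u + u := by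
  rw [cycleGraph_dist_eq, cycleGraph_dist_eq, Fin.ext_iff, Fin.ext_iff, Fin.val_add_eq_ite,
    Fin.val_add_eq_ite]
  unfold Nat.dist
  split_ifs <;> omega

lemma eq_of_cycleGraph_dist_eq_of_adj (hn : 3 ≤ n) {u u' a c : Fin n}
    (hadj : (cycleGraph n).Adj u u') (h : (cycleGraph n).dist a u = (cycleGraph n).dist c u)
    (h' : (cycleGraph n).dist a u' = (cycleGraph n).dist c u') : a = c := by
  by_contra hne
  have hu := (cycleGraph_dist_eq_dist_iff.1 h).resolve_left hne
  have hu' := (cycleGraph_dist_eq_dist_iff.1 h').resolve_left hne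
  have hdouble : u + u = u' + u' := hu.symm.trans hu'
  have := val_cases_of_cycleGraph_adj hadj
  rw [Fin.ext_iff, Fin.val_add_eq_ite, Fin.val_add_eq_ite] at hdouble
  split_ifs at hdouble <;> omega

end SimpleGraph

theorem torus_basis_even_general (s t : ℕ) (hs : 4 ≤ s) (ht : 4 ≤ t)
    (hes : Even s)
    (i i' i'' : Fin s) (j j' : Fin t)
    (hdiam : (cycleGraph s).dist i i' = s / 2)
    (hadj1 : (cycleGraph s).Adj i i'')
    (hadj2 : (cycleGraph t).Adj j j') :
    IsResolving (cycleGraph s □ cycleGraph t)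
      {(i, j), (i', j), (i'', j), (i, j')} := by
  have : NeZero s := ⟨by omega⟩
  have : NeZero t := ⟨by omega⟩
  rintro ⟨a, b⟩ ⟨c, d⟩ hne
  by_contra! hcon
  have hx := hcon (i, j) (by simp)
  have hy := hcon (i', j) (by simp)
  have hz := hcon (i'', j) (by simp)
  have hw := hcon (i, j') (by simp)
  simp only [cycleGraph_connected_of_neZero.dist_boxProd cycleGraph_connected_of_neZero]
    at hx hy hz hw
  have hai := cycleGraph_dist_add_dist_of_dist_eq_half hes hdiam a
  have hci := cycleGraph_dist_add_dist_of_dist_eq_half hes hdiam c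
  obtain rfl : a = c := eq_of_cycleGraph_dist_eq_of_adj (by omega) hadj1 (by omega) (by omega)
  obtain rfl : b = d := eq_of_cycleGraph_dist_eq_of_adj (by omega) hadj2 (by omega) (by omega)
  exact hne rfl

/-- For even `s, t ≥ 4`: if `x = (i,j)` and `y = (i',j)` are diametral in a copy of
`C_s` (their first coordinates are at distance `s/2` in `C_s`), `z = (i'',j)` with
`i''` adjacent to `i` in `C_s`, and `w = (i,j')` with `j'` adjacent to `j` in `C_t`,
then `{x,y,z,w}` is a resolving set of `C_s □ C_t`. -/
theorem torus_basis_even (s t : ℕ) (hs : 4 ≤ s) (ht : 4 ≤ t)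
    (hes : Even s) (het : Even t)
    (i i' i'' : Fin s) (j j' : Fin t)
    (hdiam : (cycleGraph s).dist i i' = s / 2)
    (hadj1 : (cycleGraph s).Adj i i'')
    (hadj2 : (cycleGraph t).Adj j j') :
    IsResolving (cycleGraph s □ cycleGraph t)
      {(i, j), (i', j), (i'', j), (i, j')} :=
  torus_basis_even_general s t hs ht hes i i' i'' j j' hdiam hadj1 hadj2
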